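/- Let s > 0, ω ∈ ℝ with ω ≠ 0, and θ ∈ ℝ. Then the integral ∫_0^∞ t^{s−1} e^{−ω² t / cosh²θ} · erfc(√t · ω tanh θ) dt converges and equals ( cosh²θ / ω² )^s · [ Γ(s) − (2/√π) Γ(s + 1/2) · sgn(ω) · sinh θ · ∫_0^1 (1 + v² sinh²θ)^{−(s + 1/2)} dv ]. (The last integral is the Euler-type integral representation of ₂F₁(1/2, s+1/2; 3/2; −sinh²θ).) -/

import Mathlib

/-
Substituting v = √t·b·w gives erfc(√t·b) = 1 − (2/√π)·√t·b·∫₀¹ e^{−b²w²t} dw, which splits the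
integrand into t^{s−1}e^{−at} and (2/√π)·b·∫₀¹ t^{s−1/2} e^{−(a+b²w²)t} dw. After exchanging the
t- and w-integrals both parts are Gamma integrals, so the integral equals
a^{−s}Γ(s) − (2/√π)·b·Γ(s+1/2)·∫₀¹ (a+b²w²)^{−(s+1/2)} dw. With a = ω²/cosh²θ and b = ω tanh θ one has
a + b²w² = a(1 + w² sinh²θ) and b·a^{−1/2} = sgn(ω) sinh θ.
-/

open scoped Real
open MeasureTheory

/-- The complementary error function `erfc(x) = (2/√π) ∫_x^∞ e^{−v²} dv`. -/
noncomputable def erfc (x : ℝ) : ℝ :=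
  2 / Real.sqrt π * ∫ v in Set.Ioi x, Real.exp (-v ^ 2)

open Set Real

lemma integrable_exp_neg_sq : Integrable fun v : ℝ => exp (-v ^ 2) := by
  simpa using integrable_exp_neg_mul_sq (b := 1) one_pos

lemma integral_Ioi_exp_neg_sq (x : ℝ) :
    ∫ v in Ioi x, exp (-v ^ 2) = √π / 2 - ∫ v in 0..x, exp (-v ^ 2) := by
  rw [← intervalIntegral.integral_Ioi_sub_Ioi' integrable_exp_neg_sq.integrableOn
    integrable_exp_neg_sq.integrableOn]
  have h := integral_gaussian_Ioi 1
  simp only [neg_mul, one_mul, div_one] at h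
  rw [h]
  ring

lemma erfc_eq_one_sub (x : ℝ) : erfc x = 1 - 2 / √π * ∫ v in 0..x, exp (-v ^ 2) := by
  have : √π ≠ 0 := by positivity
  rw [erfc, integral_Ioi_exp_neg_sq]
  field_simp

lemma erfc_nonneg (x : ℝ) : 0 ≤ erfc x :=
  mul_nonneg (by positivity) (setIntegral_nonneg measurableSet_Ioi fun _ _ => (exp_pos _).le)

lemma erfc_le_two (x : ℝ) : erfc x ≤ 2 := by
  have h : ∫ v in Ioi x, exp (-v ^ 2) ≤ √π := by
    have h := integral_gaussian 1
    simp only [neg_mul, one_mul, div_one] at h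
    exact h ▸ setIntegral_le_integral integrable_exp_neg_sq
      (Filter.Eventually.of_forall fun v => (exp_pos (-v ^ 2)).le)
  calc erfc x ≤ 2 / √π * √π := by unfold erfc; gcongr
    _ = 2 := by field_simp

lemma continuous_erfc : Continuous erfc := by
  rw [funext erfc_eq_one_sub]
  exact continuous_const.sub <| continuous_const.mul <|
    intervalIntegral.continuous_primitive (fun _ _ => integrable_exp_neg_sq.intervalIntegrable) 0

lemma integral_exp_neg_sq_eq_mul (c : ℝ) :
    ∫ v in 0..c, exp (-v ^ 2) = c * ∫ w in 0..1, exp (-(c ^ 2 * w ^ 2)) := by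
  have h := intervalIntegral.mul_integral_comp_mul_right (a := 0) (b := 1) (c := c)
    (f := fun v => exp (-v ^ 2))
  rw [zero_mul, one_mul] at h
  simp only [← h, mul_pow, mul_comm]

lemma rpow_mul_exp_neg_mul_erfc_eq {t : ℝ} (ht : 0 < t) (s a b : ℝ) :
    t ^ (s - 1) * exp (-(a * t)) * erfc (√t * b) =
      t ^ (s - 1) * exp (-(a * t)) -
        2 / √π * b * ∫ w in Ioc 0 1, t ^ (s + 1 / 2 - 1) * exp (-((a + b ^ 2 * w ^ 2) * t)) := by
  have hpow : t ^ (s + 1 / 2 - 1) = t ^ (s - 1) * √t := by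
    rw [sqrt_eq_rpow, ← rpow_add ht]
    ring_nf
  have hexp (w : ℝ) : exp (-((a + b ^ 2 * w ^ 2) * t)) =
      exp (-(a * t)) * exp (-((√t * b) ^ 2 * w ^ 2)) := by
    rw [← exp_add, mul_pow, sq_sqrt ht.le]
    ring_nf
  simp only [hpow, hexp, ← mul_assoc]
  rw [integral_const_mul, ← intervalIntegral.integral_of_le zero_le_one, erfc_eq_one_sub,
    integral_exp_neg_sq_eq_mul]
  ring

lemma integrableOn_rpow_mul_exp_neg_mul {p a : ℝ} (hp : -1 < p) (ha : 0 < a) :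
    IntegrableOn (fun t => t ^ p * exp (-(a * t))) (Ioi 0) := by
  simpa using integrableOn_rpow_mul_exp_neg_mul_rpow hp one_pos ha

lemma integrable_rpow_mul_exp_neg_add_sq_mul {p a : ℝ} (hp : -1 < p) (ha : 0 < a) (b : ℝ) :
    Integrable (Function.uncurry fun t w : ℝ => t ^ p * exp (-((a + b ^ 2 * w ^ 2) * t)))
      ((volume.restrict (Ioi 0)).prod (volume.restrict (Ioc 0 1))) := by
  have hdom : Integrable (fun z : ℝ × ℝ => z.1 ^ p * exp (-(a * z.1)) * 1)
      ((volume.restrict (Ioi 0)).prod (volume.restrict (Ioc 0 1))) :=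
    (integrableOn_rpow_mul_exp_neg_mul hp ha).integrable.mul_prod (integrable_const 1)
  refine hdom.mono' (by fun_prop : Measurable _).aestronglyMeasurable ?_
  rw [Measure.prod_restrict]
  filter_upwards [ae_restrict_mem (measurableSet_Ioi.prod measurableSet_Ioc)] with z hz
  have ht : 0 < z.1 := hz.1
  rw [Function.uncurry_apply_pair, norm_of_nonneg (by positivity), mul_one]
  gcongr
  nlinarith [mul_nonneg (mul_nonneg (sq_nonneg b) (sq_nonneg z.2)) ht.le]

lemma integral_Ioi_integral_Ioc_rpow_mul_exp {p a : ℝ} (hp : 0 < p) (ha : 0 < a) (b : ℝ) :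
    ∫ t in Ioi 0, ∫ w in Ioc 0 1, t ^ (p - 1) * exp (-((a + b ^ 2 * w ^ 2) * t)) =
      Gamma p * ∫ w in Ioc 0 1, (1 / (a + b ^ 2 * w ^ 2)) ^ p := by
  rw [integral_integral_swap (integrable_rpow_mul_exp_neg_add_sq_mul (by linarith) ha b),
    ← integral_const_mul]
  refine setIntegral_congr_fun measurableSet_Ioc fun w _ => ?_
  rw [integral_rpow_mul_exp_neg_mul_Ioi hp (by positivity), mul_comm]

theorem integrableOn_rpow_mul_exp_neg_mul_erfc {s a : ℝ} (hs : 0 < s) (ha : 0 < a) (b : ℝ) :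
    IntegrableOn (fun t => t ^ (s - 1) * exp (-(a * t)) * erfc (√t * b)) (Ioi 0) := by
  have hdom : IntegrableOn (fun t => t ^ (s - 1) * exp (-(a * t)) * 2) (Ioi 0) :=
    (integrableOn_rpow_mul_exp_neg_mul (by linarith) ha).mul_const 2
  have hmeas : Measurable fun t => t ^ (s - 1) * exp (-(a * t)) * erfc (√t * b) := by
    have := continuous_erfc.measurable
    fun_prop
  refine hdom.mono' hmeas.aestronglyMeasurable ?_
  filter_upwards [ae_restrict_mem measurableSet_Ioi] with t ht
  have ht : 0 < t := ht
  rw [norm_of_nonneg (by have := erfc_nonneg (√t * b); positivity)]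
  gcongr
  exact erfc_le_two _

theorem integral_rpow_mul_exp_neg_mul_erfc {s a : ℝ} (hs : 0 < s) (ha : 0 < a) (b : ℝ) :
    ∫ t in Ioi 0, t ^ (s - 1) * exp (-(a * t)) * erfc (√t * b) =
      (1 / a) ^ s * Gamma s -
        2 / √π * b * (Gamma (s + 1 / 2) * ∫ w in 0..1, (1 / (a + b ^ 2 * w ^ 2)) ^ (s + 1 / 2)) := by
  have hK : IntegrableOn (fun t => 2 / √π * b *
      ∫ w in Ioc 0 1, t ^ (s + 1 / 2 - 1) * exp (-((a + b ^ 2 * w ^ 2) * t))) (Ioi 0) :=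
    (integrable_rpow_mul_exp_neg_add_sq_mul (by linarith) ha b).integral_prod_left.const_mul _
  rw [setIntegral_congr_fun measurableSet_Ioi fun t ht => rpow_mul_exp_neg_mul_erfc_eq ht s a b,
    integral_sub (integrableOn_rpow_mul_exp_neg_mul (by linarith) ha) hK, integral_const_mul,
    integral_rpow_mul_exp_neg_mul_Ioi hs ha,
    integral_Ioi_integral_Ioc_rpow_mul_exp (by linarith) ha,
    intervalIntegral.integral_of_le zero_le_one]

lemma Real.sign_mul_abs (x : ℝ) : sign x * |x| = x := by
  rcases lt_trichotomy x 0 with h | rfl | h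
  · rw [sign_of_neg h, abs_of_neg h, neg_one_mul, neg_neg]
  · rw [abs_zero, mul_zero]
  · rw [sign_of_pos h, abs_of_pos h, one_mul]

lemma mul_tanh_mul_rpow_half {ω : ℝ} (hω : ω ≠ 0) (θ : ℝ) :
    ω * tanh θ * (cosh θ ^ 2 / ω ^ 2) ^ (1 / 2 : ℝ) = sign ω * sinh θ := by
  rw [← sqrt_eq_rpow, sqrt_div' _ (sq_nonneg ω), sqrt_sq (cosh_pos θ).le, sqrt_sq_eq_abs,
    tanh_eq_sinh_div_cosh]
  nth_rewrite 1 [← Real.sign_mul_abs ω]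
  have : |ω| ≠ 0 := abs_ne_zero.2 hω
  field_simp

/-- for `s > 0`, `ω ≠ 0`, the integral
`∫_0^∞ t^{s−1} e^{−ω²t/cosh²θ} erfc(√t ω tanh θ) dt` converges and equals
`(cosh²θ/ω²)^s [Γ(s) − (2/√π) Γ(s+1/2) sgn(ω) sinh θ ∫_0^1 (1+v² sinh²θ)^{−(s+1/2)} dv]`. -/
theorem stmt_12 (s ω θ : ℝ) (hs : 0 < s) (hω : ω ≠ 0) :
    IntegrableOn
      (fun t : ℝ => t ^ (s - 1) * Real.exp (-ω ^ 2 * t / Real.cosh θ ^ 2) *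
        erfc (Real.sqrt t * ω * Real.tanh θ))
      (Set.Ioi 0) ∧
    ∫ t in Set.Ioi (0 : ℝ),
        t ^ (s - 1) * Real.exp (-ω ^ 2 * t / Real.cosh θ ^ 2) *
          erfc (Real.sqrt t * ω * Real.tanh θ)
      = (Real.cosh θ ^ 2 / ω ^ 2) ^ s *
        (Real.Gamma s -
          2 / Real.sqrt π * Real.Gamma (s + 1 / 2) * Real.sign ω * Real.sinh θ *
            ∫ v in (0 : ℝ)..1, (1 + v ^ 2 * Real.sinh θ ^ 2) ^ (-(s + 1 / 2))) := by
  have hc : 0 < cosh θ ^ 2 / ω ^ 2 := by positivity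
  have hintegrand : (fun t : ℝ => t ^ (s - 1) * exp (-ω ^ 2 * t / cosh θ ^ 2) *
      erfc (√t * ω * tanh θ)) =
      fun t => t ^ (s - 1) * exp (-(ω ^ 2 / cosh θ ^ 2 * t)) * erfc (√t * (ω * tanh θ)) := by
    ext t
    ring_nf
  have hkernel (v : ℝ) : (1 / (ω ^ 2 / cosh θ ^ 2 + (ω * tanh θ) ^ 2 * v ^ 2)) ^ (s + 1 / 2) =
      (cosh θ ^ 2 / ω ^ 2) ^ (s + 1 / 2) * (1 + v ^ 2 * sinh θ ^ 2) ^ (-(s + 1 / 2)) := by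
    have hv : 0 < 1 + v ^ 2 * sinh θ ^ 2 := by positivity
    have : 1 / (ω ^ 2 / cosh θ ^ 2 + (ω * tanh θ) ^ 2 * v ^ 2) =
        cosh θ ^ 2 / ω ^ 2 * (1 + v ^ 2 * sinh θ ^ 2)⁻¹ := by
      rw [tanh_eq_sinh_div_cosh]
      field_simp
    rw [this, mul_rpow hc.le (inv_nonneg.2 hv.le), inv_rpow hv.le, ← rpow_neg hv.le]
  rw [hintegrand]
  refine ⟨integrableOn_rpow_mul_exp_neg_mul_erfc hs (by positivity) _, ?_⟩
  rw [integral_rpow_mul_exp_neg_mul_erfc hs (by positivity), one_div_div]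
  simp only [hkernel, intervalIntegral.integral_const_mul, rpow_add hc]
  linear_combination (-(2 / √π * Gamma (s + 1 / 2) * (cosh θ ^ 2 / ω ^ 2) ^ s *
    ∫ v in (0 : ℝ)..1, (1 + v ^ 2 * sinh θ ^ 2) ^ (-(s + 1 / 2)))) * mul_tanh_mul_rpow_half hω θ
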